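/- arXiv:1507.01296 — 2 statements merged into one kernel-verified Lean document; each statement's English description precedes it below -/
import Mathlib

section
/- Mean value bound for the difference of gradient differences of the ℓ_α norm: let α ∈ [2,∞), f(x) = ‖x‖_α on ℝ^m with m ≥ 1, and let a, b ∈ ℝ^m be such that the segment joining them avoids 0 and f is twice differentiable on a neighborhood of the segment. Then ‖∇f(a) − ∇f(b)‖₂ ≤ (α−1) · 1{m > 1} · ‖a − b‖₂ / min_{c∈[0,1]} ‖b + c(a−b)‖_α. -/
/-!
Write `N = ‖·‖_α` and `φ(x)_i = x_i |x_i|^(α-2)`, so that `∇N(x) = N(x)^(1-α) φ(x)`. Its derivative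
is the symmetric operator `(α-1) N^(1-α) (D - N^(-α) φ φᵀ)` with `D = diag |x_i|^(α-2)`. The bracket
is positive semidefinite by Cauchy–Schwarz (since `φ_i² = |x_i|^(α-2) |x_i|^α`) and is at most
`D ≤ N^(α-2)`, so the operator norm is at most `(α-1)/N(x)`; for `m = 1` the bracket vanishes. The
mean value inequality on the segment, where `N` is bounded below by its minimum, finishes the proof.
-/

open scoped BigOperators

/-- The ℓ_α norm on Euclidean space `ℝ^m`. -/
noncomputable def lpE (α : ℝ) {m : ℕ} (x : EuclideanSpace ℝ (Fin m)) : ℝ :=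
  (∑ i, |x i| ^ α) ^ (1 / α)

open Real Finset

theorem hasDerivAt_mul_abs_rpow_sub_two {p : ℝ} (hp : 2 ≤ p) (t : ℝ) :
    HasDerivAt (fun s => s * |s| ^ (p - 2)) ((p - 1) * |t| ^ (p - 2)) t := by
  rcases eq_or_ne t 0 with rfl | ht
  · have hcont : Continuous fun s : ℝ => |s| ^ (p - 2) :=
      (continuous_rpow_const (by linarith)).comp continuous_abs
    -- for `p = 2` both sides are `1`, by the convention `0 ^ 0 = 1`
    have hval : (p - 1) * |(0 : ℝ)| ^ (p - 2) = |(0 : ℝ)| ^ (p - 2) := by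
      rcases hp.eq_or_lt with rfl | hp
      · norm_num
      · simp [zero_rpow (sub_ne_zero.2 hp.ne')]
    rw [hasDerivAt_iff_tendsto_slope_zero, hval]
    refine (hcont.tendsto 0).mono_left nhdsWithin_le_nhds |>.congr' ?_
    filter_upwards [self_mem_nhdsWithin] with s hs
    simp [inv_mul_cancel_left₀ hs]
  · have habs := ((hasDerivAt_rpow_const (p := p - 2) (Or.inl (abs_ne_zero.2 ht))).comp t
      (hasDerivAt_abs ht))
    refine ((hasDerivAt_id' t).mul habs).congr_deriv ?_
    have hsign : t * (SignType.sign t : ℝ) = |t| := by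
      rcases ht.lt_or_gt with h | h <;> simp [h, abs_of_neg, abs_of_pos]
    have hne : |t| ≠ 0 := abs_ne_zero.2 ht
    rw [Function.comp_apply, rpow_sub_one hne]
    have hsplit : t * ((p - 2) * (|t| ^ (p - 2) / |t|) * SignType.sign t) =
        (p - 2) * |t| ^ (p - 2) * (t * SignType.sign t) / |t| := by ring
    rw [hsplit, hsign]
    field_simp
    ring

theorem sq_mul_abs_rpow_sub_two {p : ℝ} (hp : p ≠ 0) (t : ℝ) :
    t ^ 2 * |t| ^ (p - 2) = |t| ^ p := by
  rcases eq_or_ne t 0 with rfl | ht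
  · simp [zero_rpow hp]
  · rw [← sq_abs, ← rpow_natCast, ← rpow_add (abs_pos.2 ht)]
    norm_num

theorem ContinuousLinearMap.opNorm_le_of_isSymmetric {𝕜 E : Type*} [RCLike 𝕜]
    [NormedAddCommGroup E] [InnerProductSpace 𝕜 E] {T : E →L[𝕜] E} (hT : T.IsSymmetric)
    {M : ℝ} (hM : 0 ≤ M) (h : ∀ v, |RCLike.re (inner 𝕜 (T v) v)| ≤ M * ‖v‖ ^ 2) : ‖T‖ ≤ M := by
  rw [T.norm_eq_iSup_rayleighQuotient hT]
  refine ciSup_le fun v => ?_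
  rcases eq_or_ne v 0 with rfl | hv
  · simpa using hM
  · rw [rayleighQuotient, reApplyInnerSelf_apply, abs_div, abs_sq, div_le_iff₀ (by positivity)]
    exact h v

theorem IsCompact.sInf_image_pos {X : Type*} [TopologicalSpace X] {K : Set X} (hK : IsCompact K)
    (hne : K.Nonempty) {g : X → ℝ} (hg : ContinuousOn g K) (hpos : ∀ x ∈ K, 0 < g x) :
    0 < sInf (g '' K) := by
  obtain ⟨x, hx, hgx⟩ := (hK.image_of_continuousOn hg).sInf_mem (hne.image g)
  exact hgx ▸ hpos x hx

section
variable {m : ℕ} {α : ℝ}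

noncomputable def lpSignedPow (α : ℝ) (x : EuclideanSpace ℝ (Fin m)) :
    EuclideanSpace ℝ (Fin m) :=
  WithLp.toLp 2 fun i => x i * |x i| ^ (α - 2)

noncomputable def lpGrad (α : ℝ) (x : EuclideanSpace ℝ (Fin m)) : EuclideanSpace ℝ (Fin m) :=
  lpE α x ^ (1 - α) • lpSignedPow α x

theorem exists_apply_ne_zero {x : EuclideanSpace ℝ (Fin m)} (hx : x ≠ 0) : ∃ i, x i ≠ 0 := by
  by_contra! h
  exact hx (by ext i; simpa using h i)

theorem sum_abs_rpow_pos (α : ℝ) {x : EuclideanSpace ℝ (Fin m)} (hx : x ≠ 0) :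
    0 < ∑ i, |x i| ^ α := by
  obtain ⟨i, hi⟩ := exists_apply_ne_zero hx
  exact sum_pos' (fun j _ => by positivity) ⟨i, mem_univ i, by positivity⟩

theorem lpE_pos (α : ℝ) {x : EuclideanSpace ℝ (Fin m)} (hx : x ≠ 0) : 0 < lpE α x :=
  rpow_pos_of_pos (sum_abs_rpow_pos α hx) _

theorem lpE_rpow_self (hα : α ≠ 0) (x : EuclideanSpace ℝ (Fin m)) :
    lpE α x ^ α = ∑ i, |x i| ^ α := by
  rw [lpE, ← rpow_mul (by positivity), one_div_mul_cancel hα, rpow_one]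

theorem abs_le_lpE (hα : 0 < α) (x : EuclideanSpace ℝ (Fin m)) (i : Fin m) :
    |x i| ≤ lpE α x := by
  calc |x i| = (|x i| ^ α) ^ (1 / α) := by
        rw [← rpow_mul (abs_nonneg _), mul_one_div_cancel hα.ne', rpow_one]
    _ ≤ lpE α x := by
        unfold lpE
        gcongr
        exact single_le_sum (f := fun j => |x j| ^ α) (fun j _ => by positivity) (mem_univ i)

theorem continuous_lpE (hα : 0 ≤ α) : Continuous (lpE (m := m) α) := by
  unfold lpE
  fun_prop (disch := intros; first | positivity | (right; positivity))

theorem inner_lpSignedPow_sq_le (hα : α ≠ 0) (x v : EuclideanSpace ℝ (Fin m)) :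
    inner ℝ (lpSignedPow α x) v ^ 2 ≤ lpE α x ^ α * ∑ i, |x i| ^ (α - 2) * v i ^ 2 := by
  rw [lpE_rpow_self hα, EuclideanSpace.inner_eq_star_dotProduct]
  refine sum_sq_le_sum_mul_sum_of_sq_le_mul _ (fun i _ => by positivity)
    (fun i _ => by positivity) fun i _ => le_of_eq ?_
  simp only [lpSignedPow, star_trivial]
  rw [← sq_mul_abs_rpow_sub_two hα (x i)]
  ring

theorem hasGradientAt_sum_abs_rpow (hα : 1 < α) (x : EuclideanSpace ℝ (Fin m)) :
    HasGradientAt (fun y : EuclideanSpace ℝ (Fin m) => ∑ i, |y i| ^ α)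
      (α • lpSignedPow α x) x := by
  rw [hasGradientAt_iff_hasFDerivAt]
  refine (HasFDerivAt.fun_sum fun i _ => by
    exact (hasDerivAt_abs_rpow (x i) hα).comp_hasFDerivAt x
      (PiLp.hasFDerivAt_apply (𝕜 := ℝ) 2 x i)).congr_fderiv ?_
  ext v
  simp only [_root_.sum_apply, smul_apply, PiLp.proj_apply,
    smul_eq_mul, lpSignedPow, map_smul, InnerProductSpace.toDual_apply_apply,
    EuclideanSpace.inner_eq_star_dotProduct, dotProduct, Pi.star_apply, star_trivial, mul_sum]
  exact sum_congr rfl fun i _ => by ring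

theorem hasGradientAt_lpE (hα : 1 < α) {x : EuclideanSpace ℝ (Fin m)} (hx : x ≠ 0) :
    HasGradientAt (lpE α) (lpGrad α x) x := by
  have hs := sum_abs_rpow_pos α hx
  have := (hasDerivAt_rpow_const (p := 1 / α) (Or.inl hs.ne')).comp_hasFDerivAt x
    (hasGradientAt_iff_hasFDerivAt.1 (hasGradientAt_sum_abs_rpow hα x))
  rw [hasGradientAt_iff_hasFDerivAt]
  refine this.congr_fderiv ?_
  rw [← map_smul, smul_smul, lpGrad, lpE, ← rpow_mul hs.le]
  congr 2
  field_simp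

theorem hasFDerivAt_lpSignedPow (hα : 2 ≤ α) (x : EuclideanSpace ℝ (Fin m)) :
    HasFDerivAt (lpSignedPow α)
      ((α - 1) • Matrix.toEuclideanCLM (𝕜 := ℝ) (Matrix.diagonal fun i => |x i| ^ (α - 2))) x := by
  rw [← hasFDerivWithinAt_univ, hasFDerivWithinAt_piLp]
  intro i
  rw [hasFDerivWithinAt_univ]
  refine ((hasDerivAt_mul_abs_rpow_sub_two hα (x i)).comp_hasFDerivAt x
    (PiLp.hasFDerivAt_apply (𝕜 := ℝ) 2 x i)).congr_fderiv ?_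
  ext v
  simp only [smul_apply, PiLp.proj_apply, smul_eq_mul, ContinuousLinearMap.comp_smulₛₗ,
    ringHom_apply, ContinuousLinearMap.comp_apply, Matrix.ofLp_toEuclideanCLM,
    Matrix.mulVec_diagonal]
  ring

noncomputable def lpHess (α : ℝ) (x : EuclideanSpace ℝ (Fin m)) :
    EuclideanSpace ℝ (Fin m) →L[ℝ] EuclideanSpace ℝ (Fin m) :=
  ((α - 1) * lpE α x ^ (1 - α)) •
    (Matrix.toEuclideanCLM (𝕜 := ℝ) (Matrix.diagonal fun i => |x i| ^ (α - 2)) -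
      lpE α x ^ (-α) • (innerSL ℝ (lpSignedPow α x)).smulRight (lpSignedPow α x))

theorem hasFDerivAt_lpGrad (hα : 2 ≤ α) {x : EuclideanSpace ℝ (Fin m)} (hx : x ≠ 0) :
    HasFDerivAt (lpGrad α) (lpHess α x) x := by
  have hN := lpE_pos α hx
  have hscale := (hasDerivAt_rpow_const (p := 1 - α) (Or.inl hN.ne')).comp_hasFDerivAt x
    (hasGradientAt_lpE (by linarith) hx).hasFDerivAt
  refine (hscale.smul (hasFDerivAt_lpSignedPow hα x)).congr_fderiv ?_
  ext v i
  simp only [Function.comp_apply, lpGrad, map_smul, add_apply, smul_apply,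
    ContinuousLinearMap.smulRight_apply, InnerProductSpace.toDual_apply_apply, smul_eq_mul,
    PiLp.add_apply, PiLp.smul_apply, Matrix.ofLp_toEuclideanCLM, Matrix.mulVec_diagonal, lpHess,
    sub_apply, coe_innerSL_apply, PiLp.sub_apply]
  rw [show 1 - α - 1 = -α by ring]
  ring

theorem inner_lpHess_apply (x v u : EuclideanSpace ℝ (Fin m)) :
    inner ℝ (lpHess α x v) u = (α - 1) * lpE α x ^ (1 - α) *
      (∑ i, |x i| ^ (α - 2) * v i * u i -
        lpE α x ^ (-α) * inner ℝ (lpSignedPow α x) v * inner ℝ (lpSignedPow α x) u) := by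
  simp only [lpHess, smul_apply, sub_apply, ContinuousLinearMap.smulRight_apply, coe_innerSL_apply,
    inner_smul_left, inner_sub_left, ringHom_apply]
  have hdiag : inner ℝ (Matrix.toEuclideanCLM (𝕜 := ℝ)
      (Matrix.diagonal fun i => |x i| ^ (α - 2)) v) u = ∑ i, |x i| ^ (α - 2) * v i * u i := by
    simp only [EuclideanSpace.inner_eq_star_dotProduct, dotProduct, Matrix.ofLp_toEuclideanCLM,
      Pi.star_apply, Matrix.mulVec_diagonal, star_trivial]
    exact sum_congr rfl fun i _ => by ring
  rw [hdiag]
  ring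

theorem lpHess_isSymmetric (x : EuclideanSpace ℝ (Fin m)) :
    (lpHess α x : EuclideanSpace ℝ (Fin m) →ₗ[ℝ] EuclideanSpace ℝ (Fin m)).IsSymmetric := by
  intro v u
  rw [ContinuousLinearMap.coe_coe, real_inner_comm _ v, inner_lpHess_apply, inner_lpHess_apply]
  congr 2
  · exact sum_congr rfl fun i _ => by ring
  · ring

noncomputable def lpHessForm (α : ℝ) (x v : EuclideanSpace ℝ (Fin m)) : ℝ :=
  ∑ i, |x i| ^ (α - 2) * v i ^ 2 - lpE α x ^ (-α) * inner ℝ (lpSignedPow α x) v ^ 2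

theorem inner_lpHess_self (x v : EuclideanSpace ℝ (Fin m)) :
    inner ℝ (lpHess α x v) v = (α - 1) * lpE α x ^ (1 - α) * lpHessForm α x v := by
  rw [inner_lpHess_apply, lpHessForm]
  congr 2
  · exact sum_congr rfl fun i _ => by ring
  · ring

theorem lpHessForm_nonneg (hα : α ≠ 0) {x : EuclideanSpace ℝ (Fin m)} (hx : x ≠ 0)
    (v : EuclideanSpace ℝ (Fin m)) : 0 ≤ lpHessForm α x v := by
  have hNα : 0 < lpE α x ^ α := rpow_pos_of_pos (lpE_pos α hx) α
  rw [lpHessForm, sub_nonneg, rpow_neg (lpE_pos α hx).le, inv_mul_le_iff₀ hNα]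
  exact inner_lpSignedPow_sq_le hα x v

theorem lpHessForm_le (hα : 2 ≤ α) (x v : EuclideanSpace ℝ (Fin m)) :
    lpHessForm α x v ≤ lpE α x ^ (α - 2) * ‖v‖ ^ 2 := by
  have hN : 0 ≤ lpE α x := by unfold lpE; positivity
  calc lpHessForm α x v ≤ ∑ i, |x i| ^ (α - 2) * v i ^ 2 :=
        sub_le_self _ (mul_nonneg (rpow_nonneg hN _) (sq_nonneg _))
    _ ≤ ∑ i, lpE α x ^ (α - 2) * v i ^ 2 := by
        gcongr with i
        exact abs_le_lpE (by linarith) x i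
    _ = lpE α x ^ (α - 2) * ‖v‖ ^ 2 := by rw [EuclideanSpace.real_norm_sq_eq, mul_sum]

theorem lpHessForm_eq_zero_of_le_one (hα : α ≠ 0) (hm : m ≤ 1) {x : EuclideanSpace ℝ (Fin m)}
    (hx : x ≠ 0) (v : EuclideanSpace ℝ (Fin m)) : lpHessForm α x v = 0 := by
  obtain ⟨i, hi⟩ := exists_apply_ne_zero hx
  have : Subsingleton (Fin m) := Fin.subsingleton_iff_le_one.2 hm
  simp only [lpHessForm, Fintype.sum_subsingleton _ i, lpE, lpSignedPow,
    EuclideanSpace.inner_eq_star_dotProduct, dotProduct, Pi.star_apply, star_trivial]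
  have hsq : (v i * (x i * |x i| ^ (α - 2))) ^ 2 = |x i| ^ α * (|x i| ^ (α - 2) * v i ^ 2) := by
    rw [← sq_mul_abs_rpow_sub_two hα (x i)]
    ring
  rw [one_div, rpow_rpow_inv (abs_nonneg _) hα, hsq, ← mul_assoc, ← rpow_add (abs_pos.2 hi),
    neg_add_cancel, rpow_zero, one_mul, sub_self]

theorem abs_inner_lpHess_self_le (hα : 2 ≤ α) {x : EuclideanSpace ℝ (Fin m)} (hx : x ≠ 0)
    (v : EuclideanSpace ℝ (Fin m)) :
    |inner ℝ (lpHess α x v) v| ≤ (α - 1) * (if 1 < m then 1 else 0) / lpE α x * ‖v‖ ^ 2 := by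
  have hN := lpE_pos α hx
  have hscale : 0 ≤ (α - 1) * lpE α x ^ (1 - α) :=
    mul_nonneg (by linarith) (rpow_pos_of_pos hN _).le
  rw [inner_lpHess_self, abs_of_nonneg (mul_nonneg hscale (lpHessForm_nonneg (by linarith) hx v))]
  split_ifs with hm
  · calc (α - 1) * lpE α x ^ (1 - α) * lpHessForm α x v
        ≤ (α - 1) * lpE α x ^ (1 - α) * (lpE α x ^ (α - 2) * ‖v‖ ^ 2) := by
          gcongr
          exact lpHessForm_le hα x v
      _ = (α - 1) * 1 / lpE α x * ‖v‖ ^ 2 := by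
          rw [mul_one, div_eq_mul_inv, ← rpow_neg_one, show (-1 : ℝ) = 1 - α + (α - 2) by ring,
            rpow_add hN]
          ring
  · rw [lpHessForm_eq_zero_of_le_one (by linarith) (not_lt.1 hm) hx]
    simp

theorem norm_lpHess_le (hα : 2 ≤ α) {x : EuclideanSpace ℝ (Fin m)} (hx : x ≠ 0) :
    ‖lpHess α x‖ ≤ (α - 1) * (if 1 < m then 1 else 0) / lpE α x :=
  (lpHess α x).opNorm_le_of_isSymmetric (lpHess_isSymmetric x)
    (div_nonneg (mul_nonneg (by linarith) (by positivity)) (lpE_pos α hx).le)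
    (abs_inner_lpHess_self_le hα hx)

theorem norm_lpGrad_sub_le (hα : 2 ≤ α) {a b : EuclideanSpace ℝ (Fin m)}
    (hseg : ∀ x ∈ segment ℝ b a, x ≠ 0) {C : ℝ}
    (hC : ∀ x ∈ segment ℝ b a, (α - 1) * (if 1 < m then 1 else 0) / lpE α x ≤ C) :
    ‖lpGrad α a - lpGrad α b‖ ≤ C * ‖a - b‖ :=
  (convex_segment b a).norm_image_sub_le_of_norm_hasFDerivWithin_le
    (fun x hx => (hasFDerivAt_lpGrad hα (hseg x hx)).hasFDerivWithinAt)
    (fun x hx => (norm_lpHess_le hα (hseg x hx)).trans (hC x hx))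
    (left_mem_segment ℝ b a) (right_mem_segment ℝ b a)

end

theorem lp_gradient_mean_value_bound_general {m : ℕ} (α : ℝ) (hα : 2 ≤ α)
    (f : EuclideanSpace ℝ (Fin m) → ℝ) (hf : ∀ x, f x = lpE α x)
    (a b : EuclideanSpace ℝ (Fin m))
    (hseg : ∀ c ∈ Set.Icc (0 : ℝ) 1, b + c • (a - b) ≠ 0) :
    ‖gradient f a - gradient f b‖ ≤
      (α - 1) * (if 1 < m then 1 else 0) * ‖a - b‖ /
        sInf {t : ℝ | ∃ c ∈ Set.Icc (0 : ℝ) 1, t = lpE α (b + c • (a - b))} := by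
  obtain rfl : f = lpE α := funext hf
  have hcont : ContinuousOn (lpE α) (segment ℝ b a) := (continuous_lpE (by linarith)).continuousOn
  have hS : {t : ℝ | ∃ c ∈ Set.Icc (0 : ℝ) 1, t = lpE α (b + c • (a - b))} =
      lpE α '' segment ℝ b a := by
    rw [segment_eq_image', Set.image_image]
    ext
    simp [eq_comm]
  have hseg' : ∀ x ∈ segment ℝ b a, x ≠ 0 := by
    rw [segment_eq_image']
    rintro _ ⟨c, hc, rfl⟩
    exact hseg c hc
  have hcompact : IsCompact (segment ℝ b a) := by
    rw [segment_eq_image']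
    exact isCompact_Icc.image (by fun_prop)
  have hinf : 0 < sInf (lpE α '' segment ℝ b a) :=
    hcompact.sInf_image_pos ⟨b, left_mem_segment ℝ b a⟩ hcont fun x hx => lpE_pos α (hseg' x hx)
  rw [hS, (hasGradientAt_lpE (by linarith) (hseg' a (right_mem_segment ℝ b a))).gradient,
    (hasGradientAt_lpE (by linarith) (hseg' b (left_mem_segment ℝ b a))).gradient,
    mul_div_right_comm]
  refine norm_lpGrad_sub_le hα hseg' fun x hx => ?_
  gcongr
  · exact mul_nonneg (by linarith) (by positivity)
  · exact csInf_le (hcompact.image_of_continuousOn hcont).bddBelow (Set.mem_image_of_mem _ hx)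

/-- Mean value bound for the difference of gradients of the ℓ_α norm: if the segment
from b to a avoids 0 and f = ‖·‖_α is twice differentiable along it, then
‖∇f(a) − ∇f(b)‖₂ ≤ (α−1)·1{m>1}·‖a−b‖₂ / min_{c∈[0,1]} ‖b + c(a−b)‖_α. -/
theorem lp_gradient_mean_value_bound {m : ℕ} (hm : 1 ≤ m) (α : ℝ) (hα : 2 ≤ α)
    (f : EuclideanSpace ℝ (Fin m) → ℝ) (hf : ∀ x, f x = lpE α x)
    (a b : EuclideanSpace ℝ (Fin m))
    (hseg : ∀ c ∈ Set.Icc (0 : ℝ) 1, b + c • (a - b) ≠ 0)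
    (hdiff : ∀ c ∈ Set.Icc (0 : ℝ) 1, ContDiffAt ℝ 2 f (b + c • (a - b))) :
    ‖gradient f a - gradient f b‖ ≤
      (α - 1) * (if 1 < m then 1 else 0) * ‖a - b‖ /
        sInf {t : ℝ | ∃ c ∈ Set.Icc (0 : ℝ) 1, t = lpE α (b + c • (a - b))} :=
  lp_gradient_mean_value_bound_general α hα f hf a b hseg
end

section
/- Lipschitz-type difference bound for perturbed norm differences: let f(x) = ‖x‖_α on ℝ^m with α ∈ [2,∞), let β̃, β₀, δ/r ∈ ℝ^m with ‖β̃ − β₀‖₂ + ‖δ‖₂/r < ‖β₀‖_α. Then |(f(β̃ + δ/r) − f(β̃)) − (f(β₀ + δ/r) − f(β₀))| ≤ (α−1) · 1{m>1} · (‖β̃−β₀‖₂ + ‖δ‖₂/r) / (‖β₀‖_α − ‖β̃−β₀‖₂ − ‖δ‖₂/r) · ‖δ‖₂/r. -/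
open scoped BigOperators

/-- The Euclidean norm on `ℝ^m`. -/
noncomputable def e2norm {m : ℕ} (x : Fin m → ℝ) : ℝ := Real.sqrt (∑ i, x i ^ 2)

/-- The ℓ_α norm on `ℝ^m`. -/
noncomputable def lpnorm (α : ℝ) {m : ℕ} (x : Fin m → ℝ) : ℝ :=
  (∑ i, |x i| ^ α) ^ (1 / α)

/-!
Put `u = β̃ - β₀`, `d = δ / r` and `g t s = f (β₀ + t u + s d)`. The quantity to bound is the mixed
difference `g 1 1 - g 1 0 - (g 0 1 - g 0 0)`; two applications of the mean value inequality bound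
it by the supremum of the mixed partial `D²f(y)(d, u)` over the square `t, s ∈ [0, 1]`. On that
square `‖y‖_α ≥ ‖β₀‖_α - ‖u‖₂ - ‖d‖₂ > 0`, since `‖·‖_α ≤ ‖·‖₂` for `α ≥ 2`, so `f` is twice
differentiable there, with
`D²f(y)(d, u) = (α - 1) S^(1/α - 2) (S ⟨d, u⟩_w - ⟨y, d⟩_w ⟨y, u⟩_w)`,
where `w i = |y i|^(α - 2)` and `S = ∑ |y i|^α = ⟨y, y⟩_w`. The bracket is the `w`-inner product of
the bivectors `y ∧ d` and `y ∧ u`: it is at most `S · max w · ‖d‖₂ ‖u‖₂` in absolute value, with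
`max w ≤ ‖y‖_α^(α - 2)`, and it vanishes when `m = 1`. Hence
`|D²f(y)(d, u)| ≤ (α - 1) ‖d‖₂ ‖u‖₂ / ‖y‖_α`.
-/

open Finset Filter Asymptotics Topology

theorem abs_sub_sub_sub_le_of_hasDerivAt {g g₁ g₁₂ : ℝ → ℝ → ℝ} {C : ℝ}
    (hg : ∀ t ∈ Set.Icc (0 : ℝ) 1, ∀ s ∈ Set.Icc (0 : ℝ) 1, HasDerivAt (g · s) (g₁ t s) t)
    (hg₁ : ∀ t ∈ Set.Icc (0 : ℝ) 1, ∀ s ∈ Set.Icc (0 : ℝ) 1, HasDerivAt (g₁ t) (g₁₂ t s) s)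
    (hC : ∀ t ∈ Set.Icc (0 : ℝ) 1, ∀ s ∈ Set.Icc (0 : ℝ) 1, |g₁₂ t s| ≤ C) :
    |(g 1 1 - g 1 0) - (g 0 1 - g 0 0)| ≤ C := by
  have hslope : ∀ t ∈ Set.Icc (0 : ℝ) 1, |g₁ t 1 - g₁ t 0| ≤ C := fun t ht =>
    norm_image_sub_le_of_norm_deriv_le_segment_01'
      (fun s hs => (hg₁ t ht s hs).hasDerivWithinAt)
      fun s hs => hC t ht s (Set.Ico_subset_Icc_self hs)
  exact norm_image_sub_le_of_norm_deriv_le_segment_01' (f := fun t => g t 1 - g t 0)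
    (fun t ht => ((hg t ht 1 (by simp)).sub (hg t ht 0 (by simp))).hasDerivWithinAt)
    fun t ht => hslope t (Set.Ico_subset_Icc_self ht)

open RealInnerProductSpace in
theorem abs_norm_sq_mul_inner_sub_inner_mul_inner_le {E : Type*} [NormedAddCommGroup E]
    [InnerProductSpace ℝ E] (x d u : E) :
    |‖x‖ ^ 2 * ⟪d, u⟫ - ⟪x, d⟫ * ⟪x, u⟫| ≤ ‖x‖ ^ 2 * ‖d‖ * ‖u‖ := by
  set v := ‖x‖ ^ 2 • d - ⟪x, d⟫ • x
  have hv : ‖x‖ ^ 2 * ⟪d, u⟫ - ⟪x, d⟫ * ⟪x, u⟫ = ⟪v, u⟫ := by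
    simp only [v, inner_sub_left, inner_smul_left, RCLike.conj_to_real]
  have hv_sq : ‖v‖ ^ 2 = (‖x‖ ^ 2 * ‖d‖) ^ 2 - ‖x‖ ^ 2 * ⟪x, d⟫ ^ 2 := by
    simp only [v, norm_sub_sq_real, norm_smul, inner_smul_left, inner_smul_right,
      RCLike.conj_to_real, real_inner_comm d x, Real.norm_eq_abs,
      abs_pow, abs_norm]
    rw [mul_pow _ ‖x‖, sq_abs]; ring
  have hv_le : ‖v‖ ≤ ‖x‖ ^ 2 * ‖d‖ :=
    pow_le_pow_iff_left₀ (by positivity) (by positivity) two_ne_zero |>.mp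
      (by rw [hv_sq]; nlinarith [sq_nonneg (‖x‖ * ⟪x, d⟫)])
  calc |‖x‖ ^ 2 * ⟪d, u⟫ - ⟪x, d⟫ * ⟪x, u⟫| = |⟪v, u⟫| := by rw [hv]
    _ ≤ ‖v‖ * ‖u‖ := abs_real_inner_le_norm v u
    _ ≤ ‖x‖ ^ 2 * ‖d‖ * ‖u‖ := by gcongr

section WeightedGram

variable {ι : Type*} [Fintype ι]

open RealInnerProductSpace in
theorem abs_weighted_gram_le {w : ι → ℝ} {M : ℝ} (hw : ∀ i, 0 ≤ w i) (hwM : ∀ i, w i ≤ M)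
    (hM : 0 ≤ M) (x d u : ι → ℝ) :
    |(∑ i, w i * x i ^ 2) * ∑ i, w i * d i * u i -
        (∑ i, w i * x i * d i) * ∑ i, w i * x i * u i| ≤
      M * (∑ i, w i * x i ^ 2) * ‖WithLp.toLp 2 d‖ * ‖WithLp.toLp 2 u‖ := by
  let W : (ι → ℝ) → EuclideanSpace ℝ ι := fun a => WithLp.toLp 2 fun i => √(w i) * a i
  have hW_inner : ∀ a b, ⟪W a, W b⟫ = ∑ i, w i * a i * b i := fun a b => by
    simp only [W, PiLp.inner_apply, RCLike.inner_apply, conj_trivial]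
    refine sum_congr rfl fun i _ => ?_
    linear_combination (a i * b i) * Real.mul_self_sqrt (hw i)
  have hW_norm : ∀ a, ‖W a‖ ≤ √M * ‖WithLp.toLp 2 a‖ := fun a => by
    rw [← Real.sqrt_sq (norm_nonneg (W a)), ← real_inner_self_eq_norm_sq, hW_inner,
      EuclideanSpace.norm_eq, ← Real.sqrt_mul hM, mul_sum]
    refine Real.sqrt_le_sqrt (sum_le_sum fun i _ => ?_)
    simp only [Real.norm_eq_abs, sq_abs]
    nlinarith [hwM i, sq_nonneg (a i)]
  have hWx : ‖W x‖ ^ 2 = ∑ i, w i * x i ^ 2 := by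
    rw [← real_inner_self_eq_norm_sq, hW_inner]
    exact sum_congr rfl fun i _ => by ring
  calc _ = |‖W x‖ ^ 2 * ⟪W d, W u⟫ - ⟪W x, W d⟫ * ⟪W x, W u⟫| := by
        rw [hWx, hW_inner, hW_inner, hW_inner]
    _ ≤ ‖W x‖ ^ 2 * ‖W d‖ * ‖W u‖ := abs_norm_sq_mul_inner_sub_inner_mul_inner_le _ _ _
    _ ≤ ‖W x‖ ^ 2 * (√M * ‖WithLp.toLp 2 d‖) * (√M * ‖WithLp.toLp 2 u‖) := by
        gcongr <;> exact hW_norm _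
    _ = M * (∑ i, w i * x i ^ 2) * ‖WithLp.toLp 2 d‖ * ‖WithLp.toLp 2 u‖ := by
        rw [hWx]; linear_combination (∑ i, w i * x i ^ 2) * ‖WithLp.toLp 2 d‖ *
          ‖WithLp.toLp 2 u‖ * Real.mul_self_sqrt hM

theorem weighted_gram_eq_zero_of_subsingleton [Subsingleton ι] (w x d u : ι → ℝ) :
    (∑ i, w i * x i ^ 2) * ∑ i, w i * d i * u i -
      (∑ i, w i * x i * d i) * ∑ i, w i * x i * u i = 0 := by
  rcases isEmpty_or_nonempty ι with hι | ⟨⟨i⟩⟩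
  · simp
  · simp only [Fintype.sum_subsingleton _ i]
    ring

end WeightedGram

theorem abs_rpow_eq_abs_rpow_sub_two_mul_sq {α : ℝ} (hα : α ≠ 0) (y : ℝ) :
    |y| ^ α = |y| ^ (α - 2) * y ^ 2 := by
  rw [← sq_abs, ← Real.rpow_natCast, ← Real.rpow_add' (abs_nonneg y) (by simpa using hα)]
  norm_num

theorem hasDerivAt_abs_rpow_sub_two_mul {α : ℝ} (hα : 2 ≤ α) (y : ℝ) :
    HasDerivAt (fun z => |z| ^ (α - 2) * z) ((α - 1) * |y| ^ (α - 2)) y := by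
  rcases ne_or_eq y 0 with hy | rfl
  · have hy' : |y| ≠ 0 := abs_ne_zero.mpr hy
    refine (((hasDerivAt_abs hy).rpow_const (Or.inl hy')).fun_mul (hasDerivAt_id' y)).congr_deriv ?_
    rw [Real.rpow_sub_one hy', mul_right_comm _ _ y, mul_comm _ y, ← mul_assoc y, self_mul_sign]
    field_simp
    ring
  rcases hα.eq_or_lt with rfl | hα
  · norm_num
    exact hasDerivAt_id' 0
  have hpos : 0 < α - 2 := by linarith
  rw [abs_zero, Real.zero_rpow hpos.ne', mul_zero, hasDerivAt_iff_isLittleO_nhds_zero]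
  have hlim : Tendsto (fun h : ℝ => |h| ^ (α - 2)) (𝓝 0) (𝓝 0) := by
    simpa [Real.zero_rpow hpos.ne'] using
      (continuous_abs.tendsto (0 : ℝ)).rpow_const (p := α - 2) (Or.inr hpos.le)
  simpa using ((isLittleO_one_iff ℝ).2 hlim).mul_isBigO (isBigO_refl (fun h : ℝ => h) (𝓝 0))

section LpNorm

variable {m : ℕ} {α : ℝ}

theorem e2norm_nonneg (x : Fin m → ℝ) : 0 ≤ e2norm x := Real.sqrt_nonneg _

theorem e2norm_eq_norm (x : Fin m → ℝ) : e2norm x = ‖WithLp.toLp 2 x‖ := by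
  simp [e2norm, EuclideanSpace.norm_eq]

theorem e2norm_smul (c : ℝ) (x : Fin m → ℝ) : e2norm (c • x) = |c| * e2norm x := by
  rw [e2norm_eq_norm, e2norm_eq_norm, WithLp.toLp_smul, norm_smul, Real.norm_eq_abs]

theorem abs_apply_le_lpnorm (hα : 0 < α) (x : Fin m → ℝ) (i : Fin m) : |x i| ≤ lpnorm α x := by
  calc |x i| = (|x i| ^ α) ^ (1 / α) := by
        rw [one_div, Real.rpow_rpow_inv (abs_nonneg _) hα.ne']
    _ ≤ lpnorm α x := Real.rpow_le_rpow (by positivity)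
        (single_le_sum (f := fun j => |x j| ^ α) (fun j _ => by positivity) (mem_univ i))
        (by positivity)

theorem lpnorm_add_le (hα : 1 ≤ α) (x y : Fin m → ℝ) :
    lpnorm α (x + y) ≤ lpnorm α x + lpnorm α y :=
  Real.Lp_add_le univ x y hα

theorem lpnorm_le_e2norm (hα : 2 ≤ α) (x : Fin m → ℝ) : lpnorm α x ≤ e2norm x := by
  have hx : ∀ i, |x i| ≤ e2norm x := fun i =>
    Real.abs_le_sqrt (single_le_sum (fun j _ => sq_nonneg (x j)) (mem_univ i))
  have hsum : ∑ i, |x i| ^ α ≤ e2norm x ^ α := calc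
    ∑ i, |x i| ^ α = ∑ i, |x i| ^ (α - 2) * x i ^ 2 :=
      sum_congr rfl fun i _ => abs_rpow_eq_abs_rpow_sub_two_mul_sq (by linarith) _
    _ ≤ ∑ i, e2norm x ^ (α - 2) * x i ^ 2 := by
      gcongr with i; exact hx i
    _ = e2norm x ^ α := by
      rw [← mul_sum, ← Real.sq_sqrt (sum_nonneg fun i _ => sq_nonneg (x i)), ← e2norm,
        ← Real.rpow_natCast, ← Real.rpow_add' (e2norm_nonneg x) (by norm_num; linarith)]
      norm_num
  calc lpnorm α x ≤ (e2norm x ^ α) ^ (1 / α) :=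
        Real.rpow_le_rpow (sum_nonneg fun i _ => by positivity) hsum (by positivity)
    _ = e2norm x := by rw [one_div, Real.rpow_rpow_inv (e2norm_nonneg x) (by norm_num; linarith)]

theorem lpnorm_sub_e2norm_le (hα : 2 ≤ α) (x y : Fin m → ℝ) :
    lpnorm α x - e2norm y ≤ lpnorm α (x + y) := by
  have h := lpnorm_add_le (by linarith) (x + y) (-y)
  rw [add_neg_cancel_right] at h
  have : e2norm (-y) = e2norm y := by simp [e2norm_eq_norm]
  linarith [lpnorm_le_e2norm hα (-y)]

theorem lpnorm_sub_e2norm_sub_e2norm_le (hα : 2 ≤ α) (x u d : Fin m → ℝ) {t s : ℝ}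
    (ht : t ∈ Set.Icc (0 : ℝ) 1) (hs : s ∈ Set.Icc (0 : ℝ) 1) :
    lpnorm α x - e2norm u - e2norm d ≤ lpnorm α (x + t • u + s • d) := by
  have hsum : e2norm (t • u + s • d) ≤ e2norm u + e2norm d := calc
    e2norm (t • u + s • d) ≤ e2norm (t • u) + e2norm (s • d) := by
      simpa only [e2norm_eq_norm, WithLp.toLp_add] using norm_add_le _ _
    _ ≤ e2norm u + e2norm d := by
      rw [e2norm_smul, e2norm_smul, abs_of_nonneg ht.1, abs_of_nonneg hs.1]
      gcongr
      · exact mul_le_of_le_one_left (e2norm_nonneg u) ht.2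
      · exact mul_le_of_le_one_left (e2norm_nonneg d) hs.2
  rw [add_assoc]
  linarith [lpnorm_sub_e2norm_le hα x (t • u + s • d)]

theorem sum_abs_rpow_pos_of_lpnorm_pos (hα : α ≠ 0) {x : Fin m → ℝ} (h : 0 < lpnorm α x) :
    0 < ∑ i, |x i| ^ α := by
  refine (sum_nonneg fun i _ => by positivity).lt_of_ne fun h0 => ?_
  simp [lpnorm, ← h0, Real.zero_rpow (inv_ne_zero hα)] at h

noncomputable def lpDirDeriv (α : ℝ) (x v : Fin m → ℝ) : ℝ :=
  (∑ i, |x i| ^ α) ^ (1 / α - 1) * ∑ i, |x i| ^ (α - 2) * x i * v i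

noncomputable def lpHessian (α : ℝ) (x d u : Fin m → ℝ) : ℝ :=
  (α - 1) * (∑ i, |x i| ^ α) ^ (1 / α - 2) *
    ((∑ i, |x i| ^ α) * ∑ i, |x i| ^ (α - 2) * d i * u i -
      (∑ i, |x i| ^ (α - 2) * x i * d i) * ∑ i, |x i| ^ (α - 2) * x i * u i)

theorem HasDerivAt.comp_line_apply {φ : ℝ → ℝ} {φ' : ℝ} (x v : Fin m → ℝ) (i : Fin m) {t : ℝ}
    (h : HasDerivAt φ φ' ((x + t • v) i)) :
    HasDerivAt (fun s => φ ((x + s • v) i)) (φ' * v i) t := by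
  simp only [Pi.add_apply, Pi.smul_apply, smul_eq_mul] at h ⊢
  exact h.comp t ((hasDerivAt_mul_const (v i)).const_add (x i))

theorem hasDerivAt_sum_abs_rpow_line (hα : 1 < α) (x v : Fin m → ℝ) (t : ℝ) :
    HasDerivAt (fun s => ∑ i, |(x + s • v) i| ^ α)
      (α * ∑ i, |(x + t • v) i| ^ (α - 2) * (x + t • v) i * v i) t := by
  rw [mul_sum]
  refine HasDerivAt.fun_sum fun i _ => ?_
  exact ((hasDerivAt_abs_rpow _ hα).comp_line_apply x v i).congr_deriv (by ring)

theorem hasDerivAt_sum_abs_rpow_sub_two_mul_line (hα : 2 ≤ α) (x d u : Fin m → ℝ) (t : ℝ) :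
    HasDerivAt (fun s => ∑ i, |(x + s • d) i| ^ (α - 2) * (x + s • d) i * u i)
      ((α - 1) * ∑ i, |(x + t • d) i| ^ (α - 2) * d i * u i) t := by
  rw [mul_sum]
  refine HasDerivAt.fun_sum fun i _ => ?_
  exact (((hasDerivAt_abs_rpow_sub_two_mul hα _).comp_line_apply x d i).mul_const (u i)).congr_deriv
    (by ring)

theorem hasDerivAt_lpnorm_line (hα : 1 < α) (x v : Fin m → ℝ) {t : ℝ}
    (ht : 0 < lpnorm α (x + t • v)) :
    HasDerivAt (fun s => lpnorm α (x + s • v)) (lpDirDeriv α (x + t • v) v) t := by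
  have hS := sum_abs_rpow_pos_of_lpnorm_pos (by linarith) ht
  refine ((hasDerivAt_sum_abs_rpow_line hα x v t).rpow_const (p := 1 / α)
    (Or.inl hS.ne')).congr_deriv ?_
  rw [lpDirDeriv]
  field_simp

theorem hasDerivAt_lpDirDeriv_line (hα : 2 ≤ α) (x d u : Fin m → ℝ) {t : ℝ}
    (ht : 0 < lpnorm α (x + t • d)) :
    HasDerivAt (fun s => lpDirDeriv α (x + s • d) u) (lpHessian α (x + t • d) d u) t := by
  have hS := sum_abs_rpow_pos_of_lpnorm_pos (by linarith) ht
  refine (((hasDerivAt_sum_abs_rpow_line (by linarith) x d t).rpow_const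
    (p := 1 / α - 1) (Or.inl hS.ne')).fun_mul
      (hasDerivAt_sum_abs_rpow_sub_two_mul_line hα x d u t)).congr_deriv ?_
  set S := ∑ i, |(x + t • d) i| ^ α
  have hpow : S ^ (1 / α - 1) = S * S ^ (1 / α - 2) := by
    rw [mul_comm, ← Real.rpow_add_one hS.ne']; ring_nf
  rw [lpHessian, hpow, show 1 / α - 1 - 1 = 1 / α - 2 by ring]
  field_simp
  ring

theorem abs_lpHessian_le (hα : 2 ≤ α) (x d u : Fin m → ℝ) (hx : 0 < lpnorm α x) :
    |lpHessian α x d u| ≤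
      (α - 1) * (if 1 < m then 1 else 0) * e2norm d * e2norm u / lpnorm α x := by
  have hS := sum_abs_rpow_pos_of_lpnorm_pos (by linarith) hx
  unfold lpHessian
  set S := ∑ i, |x i| ^ α
  set N := lpnorm α x
  have hSw : S = ∑ i, |x i| ^ (α - 2) * x i ^ 2 :=
    sum_congr rfl fun i _ => abs_rpow_eq_abs_rpow_sub_two_mul_sq (by linarith) _
  have hgram : |S * ∑ i, |x i| ^ (α - 2) * d i * u i -
      (∑ i, |x i| ^ (α - 2) * x i * d i) * ∑ i, |x i| ^ (α - 2) * x i * u i| ≤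
      (if 1 < m then 1 else 0) * (N ^ (α - 2) * S * e2norm d * e2norm u) := by
    split_ifs with hm
    · rw [one_mul, hSw, e2norm_eq_norm, e2norm_eq_norm]
      exact abs_weighted_gram_le (fun i => by positivity)
        (fun i => Real.rpow_le_rpow (abs_nonneg _) (abs_apply_le_lpnorm (by linarith) x i)
          (by linarith)) (by positivity) x d u
    · have : Subsingleton (Fin m) := Fin.subsingleton_iff_le_one.mpr (by omega)
      rw [hSw, weighted_gram_eq_zero_of_subsingleton, zero_mul, abs_zero]
  have hscale : S ^ (1 / α - 2) * N ^ (α - 2) * S * N = 1 := by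
    rw [show N = S ^ (1 / α) from rfl, ← Real.rpow_mul hS.le, ← Real.rpow_add hS,
      ← Real.rpow_add_one hS.ne', ← Real.rpow_add hS]
    rw [show 1 / α - 2 + 1 / α * (α - 2) + 1 + 1 / α = 0 by field_simp; ring, Real.rpow_zero]
  have hcoef : 0 ≤ (α - 1) * S ^ (1 / α - 2) := mul_nonneg (by linarith) (Real.rpow_nonneg hS.le _)
  rw [abs_mul, abs_of_nonneg hcoef]
  calc _ ≤ (α - 1) * S ^ (1 / α - 2) *
        ((if 1 < m then 1 else 0) * (N ^ (α - 2) * S * e2norm d * e2norm u)) :=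
        mul_le_mul_of_nonneg_left hgram hcoef
    _ = _ := by
      rw [eq_div_iff hx.ne']
      linear_combination (α - 1) * (if 1 < m then 1 else 0) * e2norm d * e2norm u * hscale

theorem abs_lpnorm_mixed_diff_le (hα : 2 ≤ α) (x u d : Fin m → ℝ)
    (hx : e2norm u + e2norm d < lpnorm α x) :
    |(lpnorm α (x + u + d) - lpnorm α (x + u)) - (lpnorm α (x + d) - lpnorm α x)| ≤
      (α - 1) * (if 1 < m then 1 else 0) * e2norm d * e2norm u /
        (lpnorm α x - e2norm u - e2norm d) := by
  have hlow : ∀ t ∈ Set.Icc (0 : ℝ) 1, ∀ s ∈ Set.Icc (0 : ℝ) 1,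
      0 < lpnorm α (x + t • u + s • d) := fun t ht s hs => by
    linarith [lpnorm_sub_e2norm_sub_e2norm_le hα x u d ht hs]
  have hnum : 0 ≤ (α - 1) * (if 1 < m then 1 else 0) * e2norm d * e2norm u := by
    have := e2norm_nonneg d
    have := e2norm_nonneg u
    have : 0 ≤ α - 1 := by linarith
    positivity
  have hmixed := abs_sub_sub_sub_le_of_hasDerivAt
    (g := fun t s => lpnorm α (x + t • u + s • d))
    (g₁ := fun t s => lpDirDeriv α (x + t • u + s • d) u)
    (g₁₂ := fun t s => lpHessian α (x + t • u + s • d) d u)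
    (fun t ht s hs => by
      have h := hlow t ht s hs
      simp only [add_right_comm x _ (s • d)] at h ⊢
      exact hasDerivAt_lpnorm_line (by linarith) (x + s • d) u h)
    (fun t ht s hs => hasDerivAt_lpDirDeriv_line hα _ d u (hlow t ht s hs))
    (fun t ht s hs => (abs_lpHessian_le hα _ d u (hlow t ht s hs)).trans
      (div_le_div_of_nonneg_left hnum (by linarith)
        (lpnorm_sub_e2norm_sub_e2norm_le hα x u d ht hs)))
  simpa only [one_smul, zero_smul, add_zero] using hmixed

end LpNorm

theorem lp_perturbed_difference_bound_general {m : ℕ} (α : ℝ) (hα : 2 ≤ α)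
    (tb b0 δ : Fin m → ℝ) (r : ℝ) (hr : 0 < r)
    (hcond : e2norm (tb - b0) + e2norm δ / r < lpnorm α b0) :
    |(lpnorm α (tb + r⁻¹ • δ) - lpnorm α tb) -
      (lpnorm α (b0 + r⁻¹ • δ) - lpnorm α b0)| ≤
      (α - 1) * (if 1 < m then 1 else 0) *
        (e2norm (tb - b0) + e2norm δ / r) /
        (lpnorm α b0 - e2norm (tb - b0) - e2norm δ / r) * (e2norm δ / r) := by
  have hd : e2norm (r⁻¹ • δ) = e2norm δ / r := by
    rw [e2norm_smul, abs_of_pos (inv_pos.mpr hr), inv_mul_eq_div]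
  have key := abs_lpnorm_mixed_diff_le hα b0 (tb - b0) (r⁻¹ • δ) (by rwa [hd])
  rw [add_sub_cancel, hd] at key
  refine key.trans ?_
  have hδ : 0 ≤ e2norm δ / r := div_nonneg (e2norm_nonneg δ) hr.le
  have hc : (0 : ℝ) ≤ (α - 1) * (if 1 < m then 1 else 0) * (e2norm δ / r) := by
    have : 0 ≤ α - 1 := by linarith
    positivity
  rw [div_mul_eq_mul_div]
  exact div_le_div_of_nonneg_right (by nlinarith [e2norm_nonneg (tb - b0)]) (by linarith)

/-- Lipschitz-type difference bound for perturbed norm differences: for the ℓ_α norm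
with α ∈ [2,∞) and ‖β̃−β₀‖₂ + ‖δ‖₂/r < ‖β₀‖_α,
|(f(β̃+δ/r) − f(β̃)) − (f(β₀+δ/r) − f(β₀))| ≤
(α−1)·1{m>1}·(‖β̃−β₀‖₂+‖δ‖₂/r)/(‖β₀‖_α−‖β̃−β₀‖₂−‖δ‖₂/r)·‖δ‖₂/r. -/
theorem lp_perturbed_difference_bound {m : ℕ} (hm : 1 ≤ m) (α : ℝ) (hα : 2 ≤ α)
    (tb b0 δ : Fin m → ℝ) (r : ℝ) (hr : 0 < r)
    (hcond : e2norm (tb - b0) + e2norm δ / r < lpnorm α b0) :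
    |(lpnorm α (tb + r⁻¹ • δ) - lpnorm α tb) -
      (lpnorm α (b0 + r⁻¹ • δ) - lpnorm α b0)| ≤
      (α - 1) * (if 1 < m then 1 else 0) *
        (e2norm (tb - b0) + e2norm δ / r) /
        (lpnorm α b0 - e2norm (tb - b0) - e2norm δ / r) * (e2norm δ / r) :=
  lp_perturbed_difference_bound_general α hα tb b0 δ r hr hcond
end
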